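/- arXiv:math/0508110 — 2 statements merged into one kernel-verified Lean document; each statement's English description precedes it below -/
import Mathlib

section
/- For every N ≥ 1 and all integers k > ℓ ≥ 1, the two-row factorial Schur Q-polynomials satisfy Ivanov's recursion: Q_{k+1,ℓ}(x|a) + Q_{k,ℓ+1}(x|a) + (a_{k+1} + a_{ℓ+1}) Q_{k,ℓ}(x|a) = Q_k(x|a) Q_{ℓ+1}(x|a) − Q_{k+1}(x|a) Q_ℓ(x|a) + (a_{ℓ+1} − a_{k+1}) Q_k(x|a) Q_ℓ(x|a), as an identity of polynomials in x_1,…,x_N and the parameters a_i. -/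
open Finset

noncomputable section

/-- The ambient polynomial ring `ℤ[x_1,…,x_N; a_2,a_3,…]`: the variable `Sum.inl i`
is `x_{i+1}`, and `Sum.inr j` is the parameter `a_{j+2}`. -/
abbrev QRing (N : ℕ) := MvPolynomial (Fin N ⊕ ℕ) ℤ

/-- The variable `x_i` (0-indexed). -/
def xv (N : ℕ) (i : Fin N) : QRing N := MvPolynomial.X (Sum.inl i)

/-- The parameter `a_m` for `m ≥ 2`; `a_1 = 0`. -/
def av (N : ℕ) (m : ℕ) : QRing N :=
  if 2 ≤ m then MvPolynomial.X (Sum.inr (m - 2)) else 0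

/-- The generating series `∏_{i=1}^N (1+x_i z)/(1−x_i z)`. -/
def genSeries (N : ℕ) : PowerSeries (QRing N) :=
  ∏ i : Fin N,
    (1 + PowerSeries.C (R := QRing N) (xv N i) * PowerSeries.X) *
      PowerSeries.invOfUnit (1 - PowerSeries.C (R := QRing N) (xv N i) * PowerSeries.X) 1

/-- The Schur Q-polynomial `Q_m(x)`: the coefficient of `z^m` in
`∏_{i=1}^N (1+x_i z)/(1−x_i z)`. -/
def Qone (N m : ℕ) : QRing N := PowerSeries.coeff (R := QRing N) m (genSeries N)

/-- Elementary symmetric polynomial `e_j` in the parameters `a_m`, `m ∈ s`. -/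
def esymA (N : ℕ) (s : Finset ℕ) (j : ℕ) : QRing N :=
  ∑ t ∈ s.powersetCard j, ∏ m ∈ t, av N m

/-- Complete homogeneous symmetric polynomial `h_m` in the parameters `a_i`, `i ∈ s`. -/
def hsymA (N : ℕ) (s : Finset ℕ) (m : ℕ) : QRing N :=
  ∑ t ∈ s.sym m, ((t : Multiset ℕ).map (av N)).prod

/-- The one-row factorial Schur Q-polynomial
`Q_m(x|a) = Σ_{j=0}^{m−1} (−1)^j e_j(a_2,…,a_m) Q_{m−j}(x)` for `m ≥ 1`, `Q_0(x|a) = 1`. -/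
def Qfact (N m : ℕ) : QRing N :=
  if m = 0 then 1 else
    ∑ j ∈ range m, (-1) ^ j * esymA N (Icc 2 m) j * Qone N (m - j)

/-- The coefficient `f_{k,ℓ}^{r,s}(a) = (−1)^{ℓ−s} Σ_{j=0}^{k+ℓ−r−s}
2 h_{k+ℓ−r−s−j}(a_{k+1},…,a_{r+1}) e_j(a_{s+2},…,a_ℓ)`. -/
def fco (N k l r s : ℕ) : QRing N :=
  (-1) ^ (l - s) *
    ∑ j ∈ range (k + l - r - s + 1),
      2 * hsymA N (Icc (k + 1) (r + 1)) (k + l - r - s - j) * esymA N (Icc (s + 2) l) j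

/-- The two-row factorial Schur Q-polynomial `Q_{k,ℓ}(x|a)` for `k ≥ ℓ ≥ 1`. -/
def Qfact2 (N k l : ℕ) : QRing N :=
  Qfact N k * Qfact N l +
    2 * ∑ i ∈ Icc 1 l, (-1) ^ i * Qfact N (k + i) * Qfact N (l - i) +
    ∑ r ∈ Icc k (k + l - 1), ∑ s ∈ range (k + l - r),
      fco N k l r s * Qfact N r * Qfact N s

/-!
Write `f_{k,ℓ}^{r,s} = ±2 [t^{k+ℓ-r-s}] H(t) E(t)`, where `H` is the complete generating function
of `a_{k+1},…,a_{r+1}` and `E` the elementary one of `a_{s+2},…,a_ℓ`. On the diagonal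
`r + s = k + ℓ` this is `2 (-1)^{ℓ-s}`, so `Q_{k,ℓ} = Σ_{r ≥ k, r + s ≤ k + ℓ} f_{k,ℓ}^{r,s} Q_r Q_s
- Q_k Q_ℓ`. Passing to `f_{k+1,ℓ}` removes the factor `(1 - a_{k+1} t)⁻¹` from `H`, passing to
`f_{k,ℓ+1}` adds the factor `1 + a_{ℓ+1} t` to `E` and flips the sign; hence
`f_{k+1,ℓ} + f_{k,ℓ+1} + (a_{k+1} + a_{ℓ+1}) f_{k,ℓ}` vanishes on that triangle except at the
corner `(k, ℓ)`, where it is `2 a_{ℓ+1}`. The diagonal terms of `Q_{k+1,ℓ}` and `Q_{k,ℓ+1}`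
telescope to `2 Q_k Q_{ℓ+1}`. Nothing about the one-row polynomials enters: the recursion holds
with `Q_m(x|a)` replaced by any sequence.
-/

theorem Multiset.esymm_cons_succ {R : Type*} [CommSemiring R] (a : R) (s : Multiset R) (n : ℕ) :
    (a ::ₘ s).esymm (n + 1) = s.esymm (n + 1) + a * s.esymm n := by
  simp [Multiset.esymm, Multiset.powersetCard_cons, Multiset.map_map,
    Multiset.sum_map_mul_left]

theorem Finset.sym_succ_insert {α : Type*} [DecidableEq α] {x : α} {s : Finset α} (hx : x ∉ s)
    (m : ℕ) :
    (insert x s).sym (m + 1) = s.sym (m + 1) ∪ ((insert x s).sym m).image (Sym.cons x) := by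
  ext t
  simp only [mem_union, mem_sym_iff, mem_image, mem_insert]
  constructor
  · intro ht
    by_cases hxt : x ∈ t
    · refine Or.inr ⟨t.erase x hxt, fun a ha => ht a ?_, Sym.cons_erase hxt⟩
      rw [← Sym.mem_coe, Sym.coe_erase] at ha
      exact Multiset.mem_of_mem_erase ha
    · exact Or.inl fun a ha => (ht a ha).resolve_left (by rintro rfl; exact hxt ha)
  · rintro (ht | ⟨u, hu, rfl⟩) a ha
    · exact Or.inr (ht a ha)
    · exact (Sym.mem_cons.1 ha).elim Or.inl (hu a)

theorem Finset.disjoint_sym_succ_image_cons {α : Type*} [DecidableEq α] {x : α}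
    {s t : Finset α} (hx : x ∉ s) (m : ℕ) :
    Disjoint (s.sym (m + 1)) ((t.sym m).image (Sym.cons x)) := by
  simp only [disjoint_right, mem_image, mem_sym_iff]
  rintro _ ⟨u, -, rfl⟩ h
  exact hx (h x (Sym.mem_cons_self x u))

section SymmetricFunctions

variable (N : ℕ)

theorem esymA_eq_esymm (s : Finset ℕ) (j : ℕ) :
    esymA N s j = (s.val.map (av N)).esymm j :=
  (Finset.esymm_map_val _ _ _).symm

@[simp] theorem esymA_zero (s : Finset ℕ) : esymA N s 0 = 1 := by
  simp [esymA]

theorem esymA_of_card_lt {s : Finset ℕ} {j : ℕ} (h : #s < j) : esymA N s j = 0 := by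
  rw [esymA, powersetCard_eq_empty.2 h, sum_empty]

theorem esymA_insert_succ {x : ℕ} {s : Finset ℕ} (hx : x ∉ s) (j : ℕ) :
    esymA N (insert x s) (j + 1) = esymA N s (j + 1) + av N x * esymA N s j := by
  simp only [esymA_eq_esymm, insert_val_of_notMem hx, Multiset.map_cons,
    Multiset.esymm_cons_succ]

@[simp] theorem hsymA_zero (s : Finset ℕ) : hsymA N s 0 = 1 := by
  simp only [hsymA, sym_zero, sum_singleton]
  rfl

@[simp] theorem hsymA_empty_succ (m : ℕ) : hsymA N ∅ (m + 1) = 0 := by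
  simp [hsymA]

theorem hsymA_insert_succ {x : ℕ} {s : Finset ℕ} (hx : x ∉ s) (m : ℕ) :
    hsymA N (insert x s) (m + 1) = hsymA N s (m + 1) + av N x * hsymA N (insert x s) m := by
  rw [hsymA, sym_succ_insert hx, sum_union (disjoint_sym_succ_image_cons hx m),
    sum_image fun _ _ _ _ h => (Sym.cons_inj_right x _ _).1 h, hsymA, hsymA, mul_sum]
  simp only [Sym.coe_cons, Multiset.map_cons, Multiset.prod_cons]

end SymmetricFunctions

section Coefficients

variable (N : ℕ)

/-- The coefficient of `t ^ D` in `∏_{a ∈ A} (1 - a t)⁻¹ * ∏_{b ∈ B} (1 + b t)`. -/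
def hesymA (A B : Finset ℕ) (D : ℕ) : QRing N :=
  ∑ j ∈ range (D + 1), hsymA N A (D - j) * esymA N B j

theorem hesymA_insert_left_succ {x : ℕ} {A : Finset ℕ} (hx : x ∉ A) (B : Finset ℕ) (D : ℕ) :
    hesymA N (insert x A) B (D + 1) =
      hesymA N A B (D + 1) + av N x * hesymA N (insert x A) B D := by
  have hterm : ∀ j ∈ range (D + 1),
      hsymA N (insert x A) (D + 1 - j) * esymA N B j =
        hsymA N A (D + 1 - j) * esymA N B j +
          av N x * (hsymA N (insert x A) (D - j) * esymA N B j) := by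
    intro j hj
    rw [Nat.sub_add_comm (mem_range_succ_iff.1 hj), hsymA_insert_succ N hx]
    ring
  simp only [hesymA, sum_range_succ _ (D + 1), Nat.sub_self, hsymA_zero]
  rw [sum_congr rfl hterm, sum_add_distrib, mul_sum]
  ring

theorem hesymA_insert_right_succ (A : Finset ℕ) {y : ℕ} {B : Finset ℕ} (hy : y ∉ B) (D : ℕ) :
    hesymA N A (insert y B) (D + 1) = hesymA N A B (D + 1) + av N y * hesymA N A B D := by
  have hterm : ∀ j ∈ range (D + 1),
      hsymA N A (D - j) * esymA N (insert y B) (j + 1) =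
        hsymA N A (D - j) * esymA N B (j + 1) + av N y * (hsymA N A (D - j) * esymA N B j) := by
    intro j _
    rw [esymA_insert_succ N hy]
    ring
  simp only [hesymA, sum_range_succ' _ (D + 1), Nat.add_sub_add_right, Nat.sub_zero, esymA_zero]
  rw [sum_congr rfl hterm, sum_add_distrib, mul_sum]
  ring

theorem hesymA_empty_left (B : Finset ℕ) (D : ℕ) : hesymA N ∅ B D = esymA N B D := by
  rw [hesymA, sum_range_succ, Nat.sub_self, hsymA_zero, one_mul, add_eq_right]
  refine sum_eq_zero fun j hj => ?_
  obtain ⟨m, hm⟩ := Nat.exists_eq_add_of_lt (mem_range.1 hj)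
  rw [show D - j = m + 1 by omega, hsymA_empty_succ, zero_mul]

theorem hesymA_empty_right (A : Finset ℕ) (D : ℕ) : hesymA N A ∅ D = hsymA N A D := by
  rw [hesymA, sum_range_succ', esymA_zero, mul_one, Nat.sub_zero, add_eq_right]
  exact sum_eq_zero fun j _ => by rw [esymA_of_card_lt N (by simp), mul_zero]

theorem fco_eq_hesymA (k l r s : ℕ) :
    fco N k l r s =
      2 * (-1) ^ (l - s) * hesymA N (Icc (k + 1) (r + 1)) (Icc (s + 2) l) (k + l - r - s) := by
  rw [fco, hesymA, mul_sum, mul_sum]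
  exact sum_congr rfl fun j _ => by ring

theorem fco_diag (k l : ℕ) {i : ℕ} (hi : i ≤ l) : fco N k l (k + i) (l - i) = 2 * (-1) ^ i := by
  rw [fco_eq_hesymA, show k + l - (k + i) - (l - i) = 0 by omega, show l - (l - i) = i by omega,
    hesymA, sum_range_one, hsymA_zero, esymA_zero]
  ring

theorem fco_succ_left_self (k l : ℕ) {s : ℕ} (hs : s ≤ l) : fco N (k + 1) l k s = 0 := by
  rw [fco_eq_hesymA, Icc_eq_empty (by omega), hesymA_empty_left,
    esymA_of_card_lt N (by simp; omega), mul_zero]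

theorem fco_succ_right_corner (k l : ℕ) : fco N k (l + 1) k l = -2 * av N (k + 1) := by
  rw [fco_eq_hesymA, show Icc (l + 2) (l + 1) = ∅ from Icc_eq_empty (by omega),
    hesymA_empty_right, show k + (l + 1) - k - l = 0 + 1 by omega, Icc_self, ← insert_empty,
    hsymA_insert_succ N (notMem_empty _), hsymA_empty_succ, hsymA_zero, Nat.add_sub_cancel_left]
  ring

theorem fco_recursion {k l r s : ℕ} (hr : k ≤ r) (hs : s < l) (hrs : r + s ≤ k + l) :
    fco N (k + 1) l r s + fco N k (l + 1) r s + (av N (k + 1) + av N (l + 1)) * fco N k l r s =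
      0 := by
  have hleft := hesymA_insert_left_succ N (x := k + 1) (A := Icc (k + 1 + 1) (r + 1))
    (by simp) (Icc (s + 2) l) (k + l - r - s)
  have hright := hesymA_insert_right_succ N (Icc (k + 1) (r + 1)) (y := l + 1)
    (B := Icc (s + 2) l) (by simp) (k + l - r - s)
  rw [insert_Icc_add_one_left_eq_Icc (by omega)] at hleft
  rw [insert_Icc_right_eq_Icc_add_one (by omega)] at hright
  rw [fco_eq_hesymA, fco_eq_hesymA, fco_eq_hesymA,
    show k + 1 + l - r - s = k + l - r - s + 1 by omega,
    show k + (l + 1) - r - s = k + l - r - s + 1 by omega, show l + 1 - s = l - s + 1 by omega,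
    pow_succ]
  linear_combination (-2 * (-1) ^ (l - s) : QRing N) * (hleft + hright)

theorem fco_recursion_corner (k l : ℕ) :
    fco N (k + 1) l k l + fco N k (l + 1) k l + (av N (k + 1) + av N (l + 1)) * fco N k l k l =
      2 * av N (l + 1) := by
  have hdiag := fco_diag N k l (i := 0) (Nat.zero_le l)
  rw [Nat.add_zero, Nat.sub_zero] at hdiag
  rw [fco_succ_left_self N k l le_rfl, fco_succ_right_corner, hdiag]
  ring

end Coefficients

section TriangleSums

variable {R : Type*} [CommRing R] (Q : ℕ → R)

def triangleSum (c : ℕ → ℕ → R) (m n : ℕ) : R :=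
  ∑ r ∈ Ico m n, ∑ s ∈ range (n - r), c r s * Q r * Q s

theorem triangleSum_add (c d : ℕ → ℕ → R) (m n : ℕ) :
    triangleSum Q (fun r s => c r s + d r s) m n =
      triangleSum Q c m n + triangleSum Q d m n := by
  simp only [triangleSum, add_mul, sum_add_distrib]

theorem triangleSum_const_mul (b : R) (c : ℕ → ℕ → R) (m n : ℕ) :
    triangleSum Q (fun r s => b * c r s) m n = b * triangleSum Q c m n := by
  simp only [triangleSum, mul_sum, mul_assoc]

theorem triangleSum_succ (c : ℕ → ℕ → R) (m n : ℕ) :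
    triangleSum Q c m (n + 1) = triangleSum Q c m n +
      ∑ i ∈ range (n + 1 - m), c (m + i) (n - (m + i)) * Q (m + i) * Q (n - (m + i)) := by
  have hrow : ∀ r ∈ Ico m (n + 1), ∑ s ∈ range (n + 1 - r), c r s * Q r * Q s =
      ∑ s ∈ range (n - r), c r s * Q r * Q s + c r (n - r) * Q r * Q (n - r) := by
    intro r hr
    rw [Nat.sub_add_comm (Nat.lt_succ_iff.1 (mem_Ico.1 hr).2), sum_range_succ]
  have htop : ∑ r ∈ Ico m (n + 1), ∑ s ∈ range (n - r), c r s * Q r * Q s =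
      ∑ r ∈ Ico m n, ∑ s ∈ range (n - r), c r s * Q r * Q s := by
    refine (sum_subset (Ico_subset_Ico_right n.le_succ) fun r hr hrn => ?_).symm
    rw [show r = n by simp only [mem_Ico] at hr hrn; omega, Nat.sub_self, sum_range_zero]
  rw [triangleSum, sum_congr rfl hrow, sum_add_distrib, htop,
    sum_Ico_eq_sum_range (fun r => c r (n - r) * Q r * Q (n - r)), triangleSum]

theorem triangleSum_succ_left {c : ℕ → ℕ → R} {m n : ℕ} (hc : ∀ s < n - m, c m s = 0) :
    triangleSum Q c (m + 1) n = triangleSum Q c m n := by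
  refine sum_subset (Ico_subset_Ico_left m.le_succ) fun r hr hrm => ?_
  obtain rfl : r = m := by simp only [mem_Ico] at hr hrm; omega
  exact sum_eq_zero fun s hs => by rw [hc s (mem_range.1 hs), zero_mul, zero_mul]

theorem triangleSum_eq_single {c : ℕ → ℕ → R} {m n d : ℕ} (hd : m + d < n)
    (hc : ∀ r s, m ≤ r → r + s < n → (r, s) ≠ (m, d) → c r s = 0) :
    triangleSum Q c m n = c m d * Q m * Q d := by
  rw [triangleSum, sum_eq_single_of_mem m (by simp; omega),
    sum_eq_single_of_mem d (by simp; omega)]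
  · intro s hs hsd
    rw [hc m s le_rfl (by simp at hs; omega) (by simp [hsd]), zero_mul, zero_mul]
  · intro r hr hrm
    refine sum_eq_zero fun s hs => ?_
    simp only [mem_Ico, mem_range] at hr hs
    rw [hc r s hr.1 (by omega) (by simp [hrm]), zero_mul, zero_mul]

def altSum (k l : ℕ) : R :=
  ∑ i ∈ range (l + 1), (-1) ^ i * Q (k + i) * Q (l - i)

theorem altSum_eq_add_sum_Icc (k l : ℕ) :
    altSum Q k l = Q k * Q l + ∑ i ∈ Icc 1 l, (-1) ^ i * Q (k + i) * Q (l - i) := by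
  rw [altSum, show range (l + 1) = insert 0 (Icc 1 l) by ext; simp; omega, sum_insert (by simp)]
  simp

theorem altSum_succ_left_add_altSum_succ_right (k l : ℕ) :
    altSum Q (k + 1) l + altSum Q k (l + 1) = Q k * Q (l + 1) := by
  rw [altSum, altSum, sum_range_succ' _ (l + 1), ← add_assoc, ← sum_add_distrib]
  simp [pow_succ, add_right_comm k 1, add_assoc]

end TriangleSums

section TwoRow

variable (N : ℕ)

theorem Qfact2_eq_triangleSum_add_altSum {k l : ℕ} (h : 0 < k + l) :
    Qfact2 N k l = triangleSum (Qfact N) (fco N k l) k (k + l) + 2 * altSum (Qfact N) k l -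
      Qfact N k * Qfact N l := by
  rw [Qfact2, altSum_eq_add_sum_Icc, triangleSum,
    Icc_sub_one_right_eq_Ico_of_not_isMin (by simp; omega)]
  ring

theorem Qfact2_eq_triangleSum_sub {k l : ℕ} (h : 0 < k + l) :
    Qfact2 N k l = triangleSum (Qfact N) (fco N k l) k (k + l + 1) - Qfact N k * Qfact N l := by
  have hdiag : ∀ i ∈ range (l + 1),
      fco N k l (k + i) (k + l - (k + i)) * Qfact N (k + i) * Qfact N (k + l - (k + i)) =
        2 * ((-1) ^ i * Qfact N (k + i) * Qfact N (l - i)) := by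
    intro i hi
    rw [Nat.add_sub_add_left, fco_diag N k l (Nat.lt_succ_iff.1 (mem_range.1 hi))]
    ring
  rw [Qfact2_eq_triangleSum_add_altSum N h, triangleSum_succ,
    show k + l + 1 - k = l + 1 by omega, sum_congr rfl hdiag, ← mul_sum, altSum]

end TwoRow

theorem Qfact2_recursion_general (N : ℕ) (k l : ℕ) (hl : 1 ≤ l) :
    Qfact2 N (k + 1) l + Qfact2 N k (l + 1) + (av N (k + 1) + av N (l + 1)) * Qfact2 N k l =
      Qfact N k * Qfact N (l + 1) - Qfact N (k + 1) * Qfact N l +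
        (av N (l + 1) - av N (k + 1)) * Qfact N k * Qfact N l := by
  set Q := Qfact N
  have hleft : Qfact2 N (k + 1) l = triangleSum Q (fco N (k + 1) l) k (k + l + 1) +
      2 * altSum Q (k + 1) l - Q (k + 1) * Q l := by
    rw [Qfact2_eq_triangleSum_add_altSum N (by omega), add_right_comm, triangleSum_succ_left]
    exact fun s hs => fco_succ_left_self N k l (by omega)
  have hright : Qfact2 N k (l + 1) = triangleSum Q (fco N k (l + 1)) k (k + l + 1) +
      2 * altSum Q k (l + 1) - Q k * Q (l + 1) := by
    rw [Qfact2_eq_triangleSum_add_altSum N (by omega), ← add_assoc]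
  have htriangle : triangleSum Q (fco N (k + 1) l) k (k + l + 1) +
      triangleSum Q (fco N k (l + 1)) k (k + l + 1) +
      (av N (k + 1) + av N (l + 1)) * triangleSum Q (fco N k l) k (k + l + 1) =
        2 * av N (l + 1) * Q k * Q l := by
    rw [← triangleSum_add, ← triangleSum_const_mul, ← triangleSum_add,
      triangleSum_eq_single Q (d := l) (by omega), fco_recursion_corner]
    intro r s hr hrs hne
    have hs : s < l := by
      by_contra! hs
      exact hne (Prod.ext (by omega) (by omega))
    exact fco_recursion N hr hs (by omega)
  rw [hleft, hright, Qfact2_eq_triangleSum_sub N (by omega)]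
  linear_combination htriangle + 2 * altSum_succ_left_add_altSum_succ_right Q k l

/-- Ivanov's recursion: for `N ≥ 1` and `k > ℓ ≥ 1`,
`Q_{k+1,ℓ}(x|a) + Q_{k,ℓ+1}(x|a) + (a_{k+1} + a_{ℓ+1}) Q_{k,ℓ}(x|a)
 = Q_k(x|a) Q_{ℓ+1}(x|a) − Q_{k+1}(x|a) Q_ℓ(x|a) + (a_{ℓ+1} − a_{k+1}) Q_k(x|a) Q_ℓ(x|a)`. -/
theorem Qfact2_recursion (N : ℕ) (hN : 1 ≤ N) (k l : ℕ) (hl : 1 ≤ l) (hkl : l < k) :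
    Qfact2 N (k + 1) l + Qfact2 N k (l + 1) + (av N (k + 1) + av N (l + 1)) * Qfact2 N k l =
      Qfact N k * Qfact N (l + 1) - Qfact N (k + 1) * Qfact N l +
        (av N (l + 1) - av N (k + 1)) * Qfact N k * Qfact N l :=
  Qfact2_recursion_general N k l hl

end
end

section
/- Fix n ≥ 1 and δ = (δ_1,…,δ_n) ∈ {0,1}^n. For every integer k > n, the specialized one-row factorial Schur Q-polynomial Q_k(x_δ | x_⟨n⟩) is the zero polynomial in ℤ[x_1,…,x_n]. -/
open Finset

noncomputable section

/-- The specialization `ℤ[x;a] → ℤ[x_1,…,x_n]` sending `x_i ↦ δ_i x_i` (for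
`δ ∈ {0,1}^n`) and `a_m ↦ x_{n−m+2}` for `2 ≤ m ≤ n+1`, `a_m ↦ 0` for `m > n+1`
(0-indexed: the variable `Sum.inr j`, i.e. `a_{j+2}`, goes to `x` with 0-indexed
index `n−1−j` when `j < n`, and to `0` otherwise). -/
def specHom (n : ℕ) (δ : Fin n → Bool) : QRing n →+* MvPolynomial (Fin n) ℤ :=
  MvPolynomial.eval₂Hom (Int.castRingHom (MvPolynomial (Fin n) ℤ))
    (Sum.elim (fun i => if δ i then MvPolynomial.X i else 0)
      (fun j => if h : j < n then MvPolynomial.X (⟨n - 1 - j, by omega⟩ : Fin n) else 0))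

/-! The defining sum of `Q_k(x|a)` is the `z^k`-coefficient of
`∏_{m=2}^{k} (1 - a_m z) · ∏ᵢ (1 + xᵢz)/(1 - xᵢz)` (its missing term `e_k(a_2,…,a_k)` is an
elementary symmetric function of `k - 1` variables). Under `a ↦ x_⟨n⟩` only `a_2,…,a_{n+1}`
survive, each factor `(1 + δᵢxᵢz)/(1 - δᵢxᵢz)` meets its own `1 - xᵢz`, and the product
collapses to the polynomial `∏ᵢ (1 ± xᵢz)` of degree `n < k`. -/

namespace PowerSeries

variable {R : Type*} [CommRing R]

theorem coeff_prod_one_add_C_mul_X {ι : Type*} (s : Finset ι) (c : ι → R) (k : ℕ) :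
    coeff k (∏ i ∈ s, (1 + C (c i) * X)) = ∑ t ∈ s.powersetCard k, ∏ i ∈ t, c i := by
  simp_rw [prod_one_add, map_sum, prod_mul_distrib, prod_const, ← map_prod, coeff_C_mul_X_pow,
    powersetCard_eq_filter, sum_filter, eq_comm]

theorem coeff_prod_one_add_C_mul_X_of_card_lt {ι : Type*} (s : Finset ι) (c : ι → R) {k : ℕ}
    (hk : s.card < k) : coeff k (∏ i ∈ s, (1 + C (c i) * X)) = 0 := by
  rw [coeff_prod_one_add_C_mul_X, powersetCard_eq_empty.2 hk, sum_empty]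

theorem one_sub_C_mul_X_mul_map_invOfUnit {S : Type*} [CommRing S] (f : R →+* S) (x : R) :
    (1 - C (f x) * X) * map f (invOfUnit (1 - C x * X) 1) = 1 := by
  have h := congrArg (map f) (mul_invOfUnit (1 - C x * X) 1 (by simp))
  simpa only [map_mul, map_sub, map_one, map_C, map_X] using h

theorem rescale_C (a c : R) : rescale a (C c) = C c := by
  ext m
  rw [coeff_rescale, coeff_C]
  split_ifs with hm <;> simp [hm]

end PowerSeries

open PowerSeries

theorem esymA_eq_coeff (N : ℕ) (s : Finset ℕ) (j : ℕ) :
    esymA N s j = coeff j (∏ m ∈ s, (1 + C (av N m) * X)) :=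
  (coeff_prod_one_add_C_mul_X s (av N) j).symm

section Specialization

variable (n : ℕ) (δ : Fin n → Bool)

theorem specHom_xv (i : Fin n) :
    specHom n δ (xv n i) = if δ i then MvPolynomial.X i else 0 := by
  rw [xv, specHom, MvPolynomial.eval₂Hom_X', Sum.elim_inl]

theorem specHom_av_of_le {m : ℕ} (h2 : 2 ≤ m) (hm : m ≤ n + 1) :
    specHom n δ (av n m) = MvPolynomial.X (⟨n + 1 - m, by omega⟩ : Fin n) := by
  rw [av, if_pos h2, specHom, MvPolynomial.eval₂Hom_X', Sum.elim_inr, dif_pos (by omega)]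
  congr 2
  omega

theorem specHom_av_of_lt {m : ℕ} (hm : n + 1 < m) : specHom n δ (av n m) = 0 := by
  rw [av, if_pos (by omega), specHom, MvPolynomial.eval₂Hom_X', Sum.elim_inr, dif_neg (by omega)]

theorem prod_specHom_av {k : ℕ} (hk : n + 1 ≤ k) :
    ∏ m ∈ Icc 2 k, (1 + C (specHom n δ (av n m)) * X) =
      ∏ i : Fin n, (1 + C (MvPolynomial.X i) * X) := by
  rw [← prod_subset (Icc_subset_Icc_right hk) fun m hm hm' => by
    rw [specHom_av_of_lt n δ (by simp only [mem_Icc] at hm hm'; omega), map_zero, zero_mul,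
      add_zero]]
  refine prod_bij' (fun m hm => (⟨n + 1 - m, by simp only [mem_Icc] at hm; omega⟩ : Fin n))
    (fun i _ => n + 1 - i) (fun _ _ => mem_univ _) (fun i _ => by simp only [mem_Icc]; omega)
    (fun m hm => by simp only [mem_Icc] at hm; change n + 1 - (n + 1 - m) = m; omega)
    (fun i _ => by ext; simp only; omega)
    fun m hm => ?_
  simp only [mem_Icc] at hm
  rw [specHom_av_of_le n δ hm.1 hm.2]

theorem specHom_esymA {k : ℕ} (hk : n + 1 ≤ k) (j : ℕ) :
    specHom n δ (esymA n (Icc 2 k) j) = coeff j (∏ i : Fin n, (1 + C (MvPolynomial.X i) * X)) := by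
  rw [esymA_eq_coeff, ← coeff_map, map_prod]
  simp only [map_add, map_one, map_mul, map_C, map_X]
  rw [prod_specHom_av n δ hk]

theorem rescale_neg_one_mul_map_genSeries :
    rescale (-1) (∏ i : Fin n, (1 + C (MvPolynomial.X i) * X)) * map (specHom n δ) (genSeries n) =
      ∏ i : Fin n, (1 + C (if δ i then MvPolynomial.X i else -MvPolynomial.X i) * X) := by
  rw [genSeries, map_prod, map_prod, ← prod_mul_distrib]
  refine prod_congr rfl fun i _ => ?_
  have hinv := one_sub_C_mul_X_mul_map_invOfUnit (specHom n δ) (xv n i)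
  rw [specHom_xv] at hinv
  simp only [map_add, map_one, map_mul, map_C, map_X, rescale_neg_one_X, rescale_C, specHom_xv]
  split_ifs at hinv ⊢
  · linear_combination (1 + C (MvPolynomial.X i) * X) * hinv
  · simp only [map_zero, zero_mul, sub_zero, add_zero, one_mul] at hinv ⊢
    rw [hinv, map_neg]
    ring

end Specialization

theorem Qfact_specialized_vanishes_general (n : ℕ) (δ : Fin n → Bool)
    (k : ℕ) (hk : n < k) :
    specHom n δ (Qfact n k) = 0 := by
  set G := ∏ i : Fin n, (1 + C (MvPolynomial.X (R := ℤ) i) * X)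
  set F := map (specHom n δ) (genSeries n)
  have hG : coeff k G = 0 := coeff_prod_one_add_C_mul_X_of_card_lt _ _ (by simpa using hk)
  calc specHom n δ (Qfact n k)
      = ∑ j ∈ range k, coeff j (rescale (-1) G) * coeff (k - j) F := by
        rw [Qfact, if_neg (by omega), map_sum]
        refine sum_congr rfl fun j _ => ?_
        rw [map_mul, map_mul, map_pow, map_neg, map_one, specHom_esymA n δ hk, Qone,
          coeff_map, coeff_rescale]
    _ = coeff k (rescale (-1) G * F) := by
        rw [coeff_mul, Nat.sum_antidiagonal_eq_sum_range_succ_mk, sum_range_succ, coeff_rescale,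
          hG, mul_zero, zero_mul, add_zero]
    _ = 0 := by
        rw [rescale_neg_one_mul_map_genSeries]
        exact coeff_prod_one_add_C_mul_X_of_card_lt _ _ (by simpa using hk)

/-- For `n ≥ 1`, `δ ∈ {0,1}^n` and `k > n`, the specialized one-row factorial Schur
Q-polynomial `Q_k(x_δ | x_⟨n⟩)` is the zero polynomial in `ℤ[x_1,…,x_n]`. -/
theorem Qfact_specialized_vanishes (n : ℕ) (hn : 1 ≤ n) (δ : Fin n → Bool)
    (k : ℕ) (hk : n < k) :
    specHom n δ (Qfact n k) = 0 :=
  Qfact_specialized_vanishes_general n δ k hk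

end
end
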